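/- Combined safe-update correctness: let $x_{max} > 0$ and $a, b, c \in \mathbb{R}$ with $|a|, |b|, |c| \le x_{max}$. Suppose (i) $|b| \le 1$, or $|c| \le 1$, or $|b| \le x_{max}/|c|$; and (ii) writing $w = bc$, either ($a \ge 0$ and ($w \ge 0$ or $x_{max} - a \ge -w$)) or ($a < 0$ and ($w < 0$ or $x_{max} + a \ge w$)). Then $|bc| \le x_{max}$ and $|a - bc| \le x_{max}$. -/
import Mathlib


theorem safe_update_correct (xmax a b c : ℝ) (hx : 0 < xmax)
    (ha : |a| ≤ xmax) (hb : |b| ≤ xmax) (hc : |c| ≤ xmax)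
    (h1 : |b| ≤ 1 ∨ |c| ≤ 1 ∨ |b| ≤ xmax / |c|)
    (h2 : (0 ≤ a ∧ (0 ≤ b * c ∨ xmax - a ≥ -(b * c))) ∨
          (a < 0 ∧ (b * c < 0 ∨ xmax + a ≥ b * c))) :
    |b * c| ≤ xmax ∧ |a - b * c| ≤ xmax := by
  have hb0 : 0 ≤ |b| := abs_nonneg b
  have hc0 : 0 ≤ |c| := abs_nonneg c
  have hw : |b * c| ≤ xmax := by
    rw [abs_mul]
    rcases h1 with h | h | h
    · nlinarith
    · nlinarith
    · rcases eq_or_lt_of_le hc0 with h0 | h0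
      · rw [← h0]; simpa using hx.le
      · have := (le_div_iff₀ h0).mp h
        linarith
  refine ⟨hw, ?_⟩
  rw [abs_le] at *
  rcases h2 with ⟨h0, h | h⟩ | ⟨h0, h | h⟩
  · constructor <;> nlinarith [hw.1, hw.2]
  · constructor <;> nlinarith [hw.1, hw.2]
  · constructor <;> nlinarith [hw.1, hw.2]
  · constructor <;> nlinarith [hw.1, hw.2]
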